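/- Let M = (S, R, p, q) be a Kripke structure where S is a set of states, R is a total (serial) binary relation on S (every state has an R-successor), and p, q : S → Prop are atomic predicates. Then for every state s ∈ S, s satisfies the CTL formula AG A[p W q] if and only if s satisfies the CTL formula AG (p ∨ q). -/

import Mathlib

/-- `IsPath R π s`: `π` is a path from `s` in the Kripke structure with transition
relation `R`. -/
def IsPath {S : Type*} (R : S → S → Prop) (π : ℕ → S) (s : S) : Prop :=
  π 0 = s ∧ ∀ i, R (π i) (π (i + 1))

/-- CTL semantics of `A[p W q]` (universal weak until) at a state `s`. -/
def SatAW {S : Type*} (R : S → S → Prop) (p q : S → Prop) (s : S) : Prop :=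
  ∀ π : ℕ → S, IsPath R π s →
    (∀ i, p (π i)) ∨ ∃ j, q (π j) ∧ ∀ i < j, p (π i)

/-- CTL semantics of `AG φ` at a state `s`. -/
def SatAG {S : Type*} (R : S → S → Prop) (φ : S → Prop) (s : S) : Prop :=
  ∀ π : ℕ → S, IsPath R π s → ∀ i, φ (π i)

/-!
At a state satisfying `A[p W q]`, position `0` of any path already satisfies `p ∨ q`, and every
state on a path has a path of its own (the suffix), so `AG A[p W q]` gives `AG (p ∨ q)`.
Conversely, `AG` is inherited by every state on a path (prepend the prefix of the path), and if
`p ∨ q` holds all along a path, then either `p` holds forever or the first state violating `p`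
satisfies `q`.
-/

theorem weakUntil_of_forall_or {P Q : ℕ → Prop} (h : ∀ k, P k ∨ Q k) :
    (∀ i, P i) ∨ ∃ j, Q j ∧ ∀ i < j, P i := by
  classical
  by_cases hP : ∀ i, P i
  · exact .inl hP
  · obtain hP : ∃ i, ¬P i := not_forall.mp hP
    refine .inr ⟨Nat.find hP, (h _).resolve_left (Nat.find_spec hP), fun i hi => ?_⟩
    exact not_not.mp (Nat.find_min hP hi)

section

variable {S : Type*} {R : S → S → Prop} {π σ : ℕ → S} {s t : S}

theorem IsPath.shift (hπ : IsPath R π s) (i : ℕ) : IsPath R (fun k => π (i + k)) (π i) :=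
  ⟨rfl, fun k => hπ.2 (i + k)⟩

theorem IsPath.cons (hst : R s t) (hσ : IsPath R σ t) :
    IsPath R (fun | 0 => s | n + 1 => σ n) s := by
  refine ⟨rfl, fun i => ?_⟩
  cases i with
  | zero => simpa [hσ.1] using hst
  | succ i => exact hσ.2 i

theorem SatAG.of_rel {φ : S → Prop} (h : SatAG R φ s) (hst : R s t) : SatAG R φ t :=
  fun _ hσ i => h _ (hσ.cons hst) (i + 1)

theorem SatAG.of_isPath {φ : S → Prop} (h : SatAG R φ s) (hπ : IsPath R π s) (i : ℕ) :
    SatAG R φ (π i) := by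
  induction i with
  | zero => exact hπ.1 ▸ h
  | succ i ih => exact ih.of_rel (hπ.2 i)

theorem SatAG.satAW {p q : S → Prop} (h : SatAG R (fun t => p t ∨ q t) s) : SatAW R p q s :=
  fun _ hσ => weakUntil_of_forall_or (h _ hσ)

theorem SatAW.or_of_isPath {p q : S → Prop} (h : SatAW R p q s) (hπ : IsPath R π s) :
    p s ∨ q s := by
  rw [← hπ.1]
  rcases h π hπ with hp | ⟨j, hq, hp⟩
  · exact .inl (hp 0)
  · cases j with
    | zero => exact .inr hq
    | succ j => exact .inl (hp 0 j.succ_pos)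

end

theorem AG_AW_iff_AG_or_general
    {S : Type*} (R : S → S → Prop)
    (p q : S → Prop) :
    ∀ s : S, SatAG R (SatAW R p q) s ↔ SatAG R (fun t => p t ∨ q t) s := by
  intro s
  constructor
  · intro h π hπ i
    exact (h π hπ i).or_of_isPath (hπ.shift i)
  · intro h π hπ i
    exact (h.of_isPath hπ i).satAW

theorem AG_AW_iff_AG_or
    {S : Type*} (R : S → S → Prop) (hser : ∀ s, ∃ t, R s t)
    (p q : S → Prop) :
    ∀ s : S, SatAG R (SatAW R p q) s ↔ SatAG R (fun t => p t ∨ q t) s :=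
  AG_AW_iff_AG_or_general R p q
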